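/- Let q > 4 be a composite positive integer (so that J_q is composite). Then the maximal proper divisor of J_q (i.e., the largest divisor d of J_q with d < J_q) is not a Jacobsthal number, i.e., there is no index k with d = J_k. -/
import Mathlib


/-- The Jacobsthal sequence: J 0 = 0, J 1 = 1, J (k+2) = J (k+1) + 2 * J k. -/
def J : ℕ → ℕ
  | 0 => 0
  | 1 => 1
  | (k + 2) => J (k + 1) + 2 * J k

lemma J_add_two (k : ℕ) : J (k + 2) = J (k + 1) + 2 * J k := rfl

lemma J_pos : ∀ {n : ℕ}, 1 ≤ n → 0 < J n
  | 1, _ => by simp [J]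
  | 2, _ => by simp [J]
  | (n+3), _ => by
    have := J_pos (n := n + 1) (by omega)
    rw [J_add_two]; omega

lemma J_lt_succ {n : ℕ} (h : 2 ≤ n) : J n < J (n + 1) := by
  obtain ⟨m, rfl⟩ : ∃ m, n = m + 2 := ⟨n - 2, by omega⟩
  have h0 := J_pos (n := m + 1) (by omega)
  have h := J_add_two (m + 1)
  simp only [show m + 1 + 2 = m + 2 + 1 from rfl, show m + 1 + 1 = m + 2 from rfl] at h
  omega

lemma J_lt {a b : ℕ} (ha : 2 ≤ a) (h : a < b) : J a < J b := by
  induction b with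
  | zero => omega
  | succ b ih =>
    rcases Nat.lt_or_ge a b with h' | h'
    · exact (ih h').trans (J_lt_succ (by omega))
    · have : a = b := by omega
      subst this; exact J_lt_succ ha

lemma J_odd : ∀ {n : ℕ}, 1 ≤ n → J n % 2 = 1
  | 1, _ => by simp [J]
  | 2, _ => by simp [J]
  | (n+3), _ => by
    have h0 := J_odd (n := n + 2) (by omega)
    have h := J_add_two (n + 1)
    simp only [show n + 1 + 2 = n + 3 from rfl, show n + 1 + 1 = n + 2 from rfl] at h
    omega

lemma J_coprime_succ (n : ℕ) : Nat.Coprime (J n) (J (n + 1)) := by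
  induction n with
  | zero => simp [J, Nat.Coprime]
  | succ n ih =>
    have h2 : Nat.Coprime 2 (J (n + 1)) := by
      rw [Nat.coprime_two_left, Nat.odd_iff]
      exact J_odd (by omega)
    unfold Nat.Coprime
    rw [J_add_two, Nat.add_comm (J (n+1)), Nat.gcd_add_self_right,
      h2.gcd_mul_left_cancel_right]
    exact ih.symm

lemma J_add (m n : ℕ) : J (m + n + 1) = J (m + 1) * J (n + 1) + 2 * (J m * J n) := by
  induction n generalizing m with
  | zero => simp [J]
  | succ n ih =>
    have ih' := ih (m + 1)
    have h1 : m + (n + 1) + 1 = (m + 1) + n + 1 := by ring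
    rw [h1, ih', J_add_two m, J_add_two n]
    ring

lemma gcd_J_add_self (m n : ℕ) : Nat.gcd (J m) (J (n + m)) = Nat.gcd (J m) (J n) := by
  rcases m with _ | m
  · simp
  calc Nat.gcd (J (m + 1)) (J (n + (m + 1)))
      = Nat.gcd (J (m + 1)) (J (n + 1) * J (m + 1) + 2 * (J n * J m)) := by
        rw [show n + (m + 1) = n + m + 1 by ring, J_add n m]
    _ = Nat.gcd (J (m + 1)) (2 * (J n * J m)) := by
        rw [Nat.add_comm (J (n + 1) * J (m + 1)) (2 * (J n * J m)), Nat.gcd_add_mul_right_right]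
    _ = Nat.gcd (J (m + 1)) (J n * J m) := by
        have h2 : Nat.Coprime 2 (J (m + 1)) := by
          rw [Nat.coprime_two_left, Nat.odd_iff]
          exact J_odd (by omega)
        exact h2.gcd_mul_left_cancel_right (J n * J m)
    _ = Nat.gcd (J (m + 1)) (J n) :=
        Nat.Coprime.gcd_mul_right_cancel_right (J n) (J_coprime_succ m)

lemma gcd_J_add_mul_self (m n : ℕ) : ∀ k, Nat.gcd (J m) (J (n + k * m)) = Nat.gcd (J m) (J n)
  | 0 => by simp
  | k + 1 => by
    rw [← gcd_J_add_mul_self m n k, add_mul, ← add_assoc, one_mul, gcd_J_add_self _ _]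

lemma J_gcd (m n : ℕ) : J (Nat.gcd m n) = Nat.gcd (J m) (J n) := by
  induction m, n using Nat.gcd.induction with
  | H0 n => simp [J]
  | H1 m n _ h' =>
    rw [← Nat.gcd_rec m n] at h'
    conv_rhs => rw [← Nat.mod_add_div' n m]
    rwa [gcd_J_add_mul_self m (n % m) (n / m), Nat.gcd_comm (J m) _]

lemma J_dvd {a b : ℕ} (h : a ∣ b) : J a ∣ J b := by
  have h1 := J_gcd a b
  rw [Nat.gcd_eq_left h] at h1
  rw [h1]
  exact Nat.gcd_dvd_right _ _

lemma J_succ_add_self (n : ℕ) : J (n + 1) + J n = 2 ^ n := by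
  induction n with
  | zero => simp [J]
  | succ n ih => rw [J_add_two, pow_succ]; omega

lemma J_closed (n : ℕ) : 3 * (J n : ℤ) = 2 ^ n - (-1) ^ n := by
  induction n with
  | zero => simp [J]
  | succ n ih =>
    have h := J_succ_add_self n
    have h' : (J (n + 1) : ℤ) = 2 ^ n - (J n : ℤ) := by
      have : ((J (n+1) + J n : ℕ) : ℤ) = ((2 ^ n : ℕ) : ℤ) := by rw [h]
      push_cast at this; linarith
    rw [h']
    rw [pow_succ, pow_succ]
    linarith

lemma J_upper (n : ℕ) : 3 * J n ≤ 2 ^ n + 1 := by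
  have h := J_closed n
  have h1 : ((-1 : ℤ)) ^ n = 1 ∨ ((-1 : ℤ)) ^ n = -1 := by
    rcases Nat.even_or_odd n with h1 | h1
    · exact Or.inl h1.neg_one_pow
    · exact Or.inr h1.neg_one_pow
  zify; rcases h1 with h1 | h1 <;> rw [h1] at h <;> push_cast at h ⊢ <;> linarith

lemma J_lower (n : ℕ) : 2 ^ n ≤ 3 * J n + 1 := by
  have h := J_closed n
  have h1 : ((-1 : ℤ)) ^ n = 1 ∨ ((-1 : ℤ)) ^ n = -1 := by
    rcases Nat.even_or_odd n with h1 | h1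
    · exact Or.inl h1.neg_one_pow
    · exact Or.inr h1.neg_one_pow
  zify; rcases h1 with h1 | h1 <;> rw [h1] at h <;> push_cast at h ⊢ <;> linarith

lemma J_three : J 3 = 3 := rfl

lemma J_ge_three {n : ℕ} (h : 3 ≤ n) : 3 ≤ J n := by
  rcases Nat.eq_or_lt_of_le h with h' | h'
  · rw [← h', J_three]
  · have := J_lt (a := 3) (by omega) h'
    rw [J_three] at this; omega

lemma J_le_one {n : ℕ} (h : n ≤ 2) : J n ≤ 1 := by
  interval_cases n <;> simp [J]

theorem jacobsthal_maximal_proper_divisor_not_jacobsthal (q : ℕ) (hq : 4 < q)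
    (hcomp : ¬ q.Prime) (d : ℕ) (hd : d ∣ J q) (hdlt : d < J q)
    (hmax : ∀ e : ℕ, e ∣ J q → e < J q → e ≤ d) :
    ¬ ∃ k : ℕ, J k = d := by
  rintro ⟨k, hk⟩
  have hq1 : q ≠ 1 := by omega
  have hsp : q.minFac.Prime := Nat.minFac_prime hq1
  have hs2 : 2 ≤ q.minFac := hsp.two_le
  have hsd : q.minFac ∣ q := Nat.minFac_dvd q
  set s := q.minFac with hs
  set m := q / s with hmdef
  have hqsm : s * m = q := Nat.mul_div_cancel' hsd
  have hm3 : 3 ≤ m := by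
    rcases Nat.lt_or_ge s 3 with h | h
    · have hs2' : s = 2 := by omega
      rw [hs2'] at hqsm; omega
    · have hsq : s * s ≤ q := by
        have := Nat.minFac_sq_le_self (n := q) (by omega) hcomp
        rw [← hs] at this; nlinarith [this, sq_nonneg s]
      have : s ≤ m := by nlinarith
      omega
  have h2m : 2 * m ≤ q := by nlinarith
  have hmq : m < q := by nlinarith
  have hJqpos : 0 < J q := J_pos (by omega)
  have hJm3 : 3 ≤ J m := J_ge_three hm3
  have hJmdvd : J m ∣ J q := J_dvd ⟨s, by rw [← hqsm]; ring⟩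
  have hJmq : J m < J q := J_lt (by omega) hmq
  obtain ⟨e, he⟩ := hJmdvd
  have heltJq : e < J q := by
    by_contra hcon
    push_neg at hcon
    nlinarith
  have hed : e ≤ d := hmax e ⟨J m, by rw [he]; ring⟩ heltJq
  have he2 : 2 ≤ e := by
    rcases Nat.lt_or_ge e 2 with h | h
    · interval_cases e <;> omega
    · exact h
  have hd2 : 2 ≤ d := le_trans he2 hed
  have hJqle : J q ≤ J m * J k := by
    rw [hk]
    calc J q = J m * e := he
      _ ≤ J m * d := Nat.mul_le_mul_left _ hed
  have hk3 : 3 ≤ k := by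
    by_contra hcon
    push_neg at hcon
    have := J_le_one (n := k) (by omega)
    omega
  have hJk3 : 3 ≤ J k := J_ge_three hk3
  have hJkdvd : J k ∣ J q := hk ▸ hd
  have hgcd : J (Nat.gcd k q) = J k := by rw [J_gcd, Nat.gcd_eq_left hJkdvd]
  have hgk : Nat.gcd k q ≤ k := Nat.gcd_le_left _ (by omega)
  have hg3 : 3 ≤ Nat.gcd k q := by
    by_contra hcon
    push_neg at hcon
    have := J_le_one (n := Nat.gcd k q) (by omega)
    omega
  have hgek : Nat.gcd k q = k := by
    by_contra hcon
    have : J (Nat.gcd k q) < J k := J_lt (by omega) (by omega)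
    omega
  have hkq : k ∣ q := hgek ▸ Nat.gcd_dvd_right k q
  have hkltq : k < q := by
    by_contra hcon
    push_neg at hcon
    rcases Nat.eq_or_lt_of_le hcon with h | h
    · rw [← h] at hk; omega
    · have := J_lt (a := q) (by omega) h
      omega
  have h2k : 2 * k ≤ q := by
    obtain ⟨c, rfl⟩ := hkq
    have hc2 : 2 ≤ c := by
      rcases Nat.lt_or_ge c 2 with h | h
      · interval_cases c <;> omega
      · exact h
    nlinarith
  have hu1 := J_upper k
  have hu2 := J_upper m
  have hl := J_lower q
  have hmul : (3 * J m) * (3 * J k) ≤ (2 ^ m + 1) * (2 ^ k + 1) :=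
    Nat.mul_le_mul hu2 hu1
  have hexp : (2 ^ m + 1) * (2 ^ k + 1) = 2 ^ (m + k) + 2 ^ m + 2 ^ k + 1 := by
    rw [pow_add]; ring
  have hfin : 9 * J q ≤ 2 ^ (m + k) + 2 ^ m + 2 ^ k + 1 := by
    calc 9 * J q ≤ 9 * (J m * J k) := by omega
      _ = (3 * J m) * (3 * J k) := by ring
      _ ≤ (2 ^ m + 1) * (2 ^ k + 1) := hmul
      _ = _ := hexp
  have hpow1 : 2 ^ (m + k) ≤ 2 ^ q := Nat.pow_le_pow_right (by omega) (by omega)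
  have hpow2 : 2 ^ k * 4 ≤ 2 ^ q := by
    calc 2 ^ k * 4 = 2 ^ (k + 2) := by rw [pow_add]; norm_num
      _ ≤ 2 ^ q := Nat.pow_le_pow_right (by omega) (by omega)
  have hpow3 : 2 ^ m * 4 ≤ 2 ^ q := by
    calc 2 ^ m * 4 = 2 ^ (m + 2) := by rw [pow_add]; norm_num
      _ ≤ 2 ^ q := Nat.pow_le_pow_right (by omega) (by omega)
  have hq32 : 32 ≤ 2 ^ q := by
    calc (32 : ℕ) = 2 ^ 5 := by norm_num
      _ ≤ 2 ^ q := Nat.pow_le_pow_right (by omega) (by omega)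
  omega
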